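/- arXiv:nlin/0405008 — 2 statements merged into one kernel-verified Lean document; each statement's English description precedes it below -/
import Mathlib

section
/- Let B be a Banach algebra over ℝ (a complete normed ring), and let exp denote its exponential defined by the power series exp(x) = Σ_{n≥0} xⁿ/n!. For any elements h, v, g, r ∈ B, set n := g − exp(−h)·g·exp(h) and F := exp(−v)·exp(n−g)·exp(r)·exp(g). Then exp(g)·(exp(h)·exp(v)·F)·exp(−g) = exp(h)·exp(r). -/
open NormedSpace

/-- The controlled map `e^{H} e^{V} e^{f}`, with
`e^{f} = e^{-V} e^{NV - ΓV} e^{RV} e^{ΓV}`, is conjugate via `e^{ΓV}` to `e^{H} e^{RV}`.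
Here `h, v, g, r` stand for the Lie operators `{H}, {V}, {ΓV}, {RV}`, viewed as elements
of a Banach algebra, and `n := g - exp(-h) * g * exp h` encodes `e^{-{H}} Γ = Γ - N`. -/
theorem controlled_map_conjugate_to_resonant
    {B : Type*} [NormedRing B] [NormedAlgebra ℝ B] [CompleteSpace B]
    (h v g r : B)
    (n : B) (hn : n = g - exp (-h) * g * exp h)
    (F : B) (hF : F = exp (-v) * exp (n - g) * exp r * exp g) :
    exp g * (exp h * exp v * F) * exp (-g) = exp h * exp r := by
  letI : NormedAlgebra ℚ B := NormedAlgebra.restrictScalars ℚ ℝ B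
  have inv1 : ∀ x : B, exp x * exp (-x) = 1 := fun x => by
    rw [← exp_add_of_commute (Commute.refl x).neg_right, add_neg_cancel, exp_zero]
  have inv2 : ∀ x : B, exp (-x) * exp x = 1 := fun x => by
    rw [← exp_add_of_commute (Commute.refl x).neg_left, neg_add_cancel, exp_zero]
  -- exp(n - g) = exp(-h) * exp(-g) * exp(h)
  have key : exp (n - g) = exp (-h) * exp (-g) * exp h := by
    set u : Bˣ := ⟨exp (-h), exp h, inv2 h, inv1 h⟩ with hu
    have : n - g = (u : B) * (-g) * ↑u⁻¹ := by
      simp only [hu, Units.inv_mk, hn]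
      noncomm_ring
    rw [this, exp_units_conj]
    rfl
  rw [hF, key]
  calc exp g * (exp h * exp v *
        (exp (-v) * (exp (-h) * exp (-g) * exp h) * exp r * exp g)) * exp (-g)
      = exp g * exp h * (exp v * exp (-v)) * exp (-h) * exp (-g) * exp h *
        exp r * (exp g * exp (-g)) := by noncomm_ring
    _ = exp g * (exp h * exp (-h)) * exp (-g) * exp h * exp r := by
        rw [inv1 v, inv1 g]; noncomm_ring
    _ = exp g * exp (-g) * (exp h * exp r) := by rw [inv1 h]; noncomm_ring
    _ = exp h * exp r := by rw [inv1 g, one_mul]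
end

section
/- Let ε ∈ ℝ and let ω : ℝ → ℝ be differentiable. Define V(A,φ) = −(εA/(1+A)) cos φ and G(A,φ) = −(εA/(2(1+A)))·sin(φ + ω(A)/2)/sin(ω(A)/2). Then for all A, φ ∈ ℝ with A ≠ −1 and sin(ω(A)/2) ≠ 0: (∂V/∂A)(A,φ)·(∂G/∂φ)(A,φ) − (ω′(A)/2)·((∂G/∂φ)(A,φ))² = (ε²A/(2(1+A)²))·(cos(φ + ω(A)/2)/sin(ω(A)/2))·[ cos φ/(1+A) − A·ω′(A)·cos(φ + ω(A)/2)/(4 sin(ω(A)/2)) ]. -/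
open Real

theorem hasDerivAt_neg_mul_div_one_add_mul (c k : ℝ) {a : ℝ} (ha : 1 + a ≠ 0) :
    HasDerivAt (fun x => -(c * x / (1 + x)) * k) (-(c / (1 + a) ^ 2) * k) a := by
  refine ((((hasDerivAt_id' a).const_mul c).div ((hasDerivAt_id' a).const_add 1) ha).neg.mul_const
    k).congr_deriv ?_
  ring

theorem tokamap_control_term_general (ε : ℝ) (ω : ℝ → ℝ)
    (V G : ℝ → ℝ → ℝ)
    (hV : ∀ A φ : ℝ, V A φ = -(ε * A / (1 + A)) * Real.cos φ)
    (hG : ∀ A φ : ℝ, G A φ =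
      -(ε * A / (2 * (1 + A))) * (Real.sin (φ + ω A / 2) / Real.sin (ω A / 2))) :
    ∀ A φ : ℝ, A ≠ -1 → Real.sin (ω A / 2) ≠ 0 →
      deriv (fun a => V a φ) A * deriv (fun p => G A p) φ
          - (deriv ω A / 2) * (deriv (fun p => G A p) φ) ^ 2
        = (ε ^ 2 * A / (2 * (1 + A) ^ 2)) * (Real.cos (φ + ω A / 2) / Real.sin (ω A / 2))
            * (Real.cos φ / (1 + A)
               - A * deriv ω A * Real.cos (φ + ω A / 2) / (4 * Real.sin (ω A / 2))) := by
  intro A φ hA hs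
  have h1A : 1 + A ≠ 0 := fun h => hA (by linarith)
  have hVA : deriv (fun a => V a φ) A = -(ε / (1 + A) ^ 2) * cos φ := by
    simp only [hV]
    exact (hasDerivAt_neg_mul_div_one_add_mul ε (cos φ) h1A).deriv
  have hGφ : deriv (fun p => G A p) φ
      = -(ε * A / (2 * (1 + A))) * (cos (φ + ω A / 2) / sin (ω A / 2)) := by
    simp [hG]
  rw [hVA, hGφ]
  field_simp
  ring

/-- The tokamap control term (Eq. (13) reduced to its two surviving terms): with
`V(A,φ) = -(εA/(1+A)) cos φ` and `ΓV(A,φ) = G(A,φ) = -(εA/(2(1+A))) sin(φ+ω(A)/2)/sin(ω(A)/2)`,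
one has `(∂_A V)(∂_φ G) - (ω'(A)/2)(∂_φ G)²
  = (ε²A/(2(1+A)²))(cos(φ+ω(A)/2)/sin(ω(A)/2))[cos φ/(1+A) - Aω'(A)cos(φ+ω(A)/2)/(4 sin(ω(A)/2))]`
for `A ≠ -1` and `sin(ω(A)/2) ≠ 0`. -/
theorem tokamap_control_term (ε : ℝ) (ω : ℝ → ℝ) (hω : Differentiable ℝ ω)
    (V G : ℝ → ℝ → ℝ)
    (hV : ∀ A φ : ℝ, V A φ = -(ε * A / (1 + A)) * Real.cos φ)
    (hG : ∀ A φ : ℝ, G A φ =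
      -(ε * A / (2 * (1 + A))) * (Real.sin (φ + ω A / 2) / Real.sin (ω A / 2))) :
    ∀ A φ : ℝ, A ≠ -1 → Real.sin (ω A / 2) ≠ 0 →
      deriv (fun a => V a φ) A * deriv (fun p => G A p) φ
          - (deriv ω A / 2) * (deriv (fun p => G A p) φ) ^ 2
        = (ε ^ 2 * A / (2 * (1 + A) ^ 2)) * (Real.cos (φ + ω A / 2) / Real.sin (ω A / 2))
            * (Real.cos φ / (1 + A)
               - A * deriv ω A * Real.cos (φ + ω A / 2) / (4 * Real.sin (ω A / 2))) :=
  tokamap_control_term_general ε ω V G hV hG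
end
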